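/- Let L, S, V ∈ ℕ, let (F_s)_{s∈{0,...,S-1}} be functions defined on subsets of 2^{-L}ℤ^d ∩ [0,1)^d, each taking at most V values. Then for any nonempty 2^{-LS}-set A₀ ⊆ [0,1)^d there exists an (L,S)-uniform subset A ⊆ A₀ with |A| ≥ (2LVd)^{-S}|A₀| such that, for each s, the value F_s(A^I_L) is the same for all dyadic cubes I ∈ D_{sL} intersecting A. -/

import Mathlib

open Set Metric Pointwise

noncomputable section

/-- The half-open dyadic cube of side `2^{-k}` indexed by `j ∈ ℤ^d`. -/
def dyadicCube (d k : ℕ) (j : Fin d → ℤ) : Set (EuclideanSpace ℝ (Fin d)) :=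
  {x | ∀ i, (j i : ℝ) ≤ 2 ^ k * x i ∧ 2 ^ k * x i < j i + 1}

/-- Indices of dyadic cubes of side `2^{-k}` meeting `A`. -/
def covIdx (d k : ℕ) (A : Set (EuclideanSpace ℝ (Fin d))) : Set (Fin d → ℤ) :=
  {j | (A ∩ dyadicCube d k j).Nonempty}

/-- The dyadic covering number `|A|_{2^{-k}}`. -/
def covNum (d k : ℕ) (A : Set (EuclideanSpace ℝ (Fin d))) : ℕ :=
  (covIdx d k A).ncard

/-- The unit cube `[0,1)^d`. -/
def unitCube (d : ℕ) : Set (EuclideanSpace ℝ (Fin d)) := {x | ∀ i, 0 ≤ x i ∧ x i < 1}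

/-- A `2^{-m}`-set : a subset of `2^{-m}ℤ^d ∩ [0,1)^d`. -/
def IsDyadicSet (d m : ℕ) (A : Set (EuclideanSpace ℝ (Fin d))) : Prop :=
  A ⊆ unitCube d ∧ ∀ x ∈ A, ∀ i, ∃ n : ℤ, x i = n / 2 ^ m

/-- `(L,S)`-uniformity with branching numbers `R s`. -/
def IsUniform (d L S : ℕ) (R : ℕ → ℕ) (A : Set (EuclideanSpace ℝ (Fin d))) : Prop :=
  ∀ s < S, ∀ j ∈ covIdx d (s * L) A,
    covNum d ((s + 1) * L) (A ∩ dyadicCube d (s * L) j) = R s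

/-- The homothety mapping the dyadic cube of level `k` with index `j` onto `[0,1)^d`. -/
def renorm (d k : ℕ) (j : Fin d → ℤ) (y : EuclideanSpace ℝ (Fin d)) :
    EuclideanSpace ℝ (Fin d) := WithLp.toLp 2 (fun i => 2 ^ k * y i - j i)

/-- The `2^{-L}`-set associated to a set `B ⊆ [0,1)^d`: representatives `j/2^L` of
dyadic cubes of side `2^{-L}` meeting `B`. -/
def discretize (d L : ℕ) (B : Set (EuclideanSpace ℝ (Fin d))) :
    Set (EuclideanSpace ℝ (Fin d)) :=
  {x | ∃ j ∈ covIdx d L B, x = fun i => (j i : ℝ) / 2 ^ L}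

/-!
Prune the set from the finest scale upwards. At level `s`, inside each cube `I ∈ D_{sL}` keep a
set of `2^t` children (`t < Ld`) carrying at least half of the points of `A ∩ I`; this is possible
because `I` has at most `2^{Ld}` children. Then keep only the cubes `I` whose pair
`(t, F_s(A^I_L))` is the one carrying the most points; there are at most `LdV` such pairs. Each
level thus costs a factor `2LVd`, and since whole children are kept or discarded, the branching
numbers and values already fixed at the finer levels are not disturbed.
-/

open Finset

section Combinatorics

variable {α β γ W : Type*}

def IsSaturated (g : α → γ) (A B : Finset α) : Prop :=
  ∀ x ∈ B, ∀ y ∈ A, g x = g y → x ∈ A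

theorem IsSaturated.trans {g : α → γ} {A B C : Finset α} (hAB : IsSaturated g A B)
    (hBC : IsSaturated g B C) (hA : A ⊆ B) : IsSaturated g A C :=
  fun x hx y hy hxy => hAB x (hBC x hx y (hA hy) hxy) y hy hxy

theorem IsSaturated.of_finer {g : α → γ} {g' : α → β} (h : ∀ x y, g' x = g' y → g x = g y)
    {A B : Finset α} (hAB : IsSaturated g A B) : IsSaturated g' A B :=
  fun x hx y hy hxy => hAB x hx y hy (h x y hxy)

theorem IsSaturated.filter_eq [DecidableEq γ] {g : α → γ} {A B : Finset α}
    (hAB : IsSaturated g A B) (hA : A ⊆ B) {j : γ} (hj : j ∈ A.image g) :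
    {x ∈ A | g x = j} = {x ∈ B | g x = j} := by
  obtain ⟨y, hy, rfl⟩ := mem_image.1 hj
  ext x
  simp only [mem_filter]
  exact ⟨fun h => ⟨hA h.1, h.2⟩, fun h => ⟨hAB x h.1 y hy h.2, h.2⟩⟩

theorem exists_lt_pow_two_le_le_two_mul_pow {N M : ℕ} (hN : 1 ≤ N) (hNM : N ≤ 2 ^ M)
    (hM : 1 ≤ M) : ∃ t < M, 2 ^ t ≤ N ∧ N ≤ 2 * 2 ^ t := by
  induction M, hM using Nat.le_induction with
  | base => exact ⟨0, one_pos, by simpa using hN, by simpa using hNM⟩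
  | succ M hM ih =>
    by_cases h : N ≤ 2 ^ M
    · obtain ⟨t, ht, h₁, h₂⟩ := ih h
      exact ⟨t, ht.trans M.lt_succ_self, h₁, h₂⟩
    · exact ⟨M, M.lt_succ_self, by omega, by rwa [← pow_succ']⟩

theorem exists_subset_card_eq_sum_le_two_mul_sum [DecidableEq α] (K : Finset α) (w : α → ℕ)
    {n : ℕ} (hn : n ≤ #K) (hK : #K ≤ 2 * n) :
    ∃ K' ⊆ K, #K' = n ∧ ∑ i ∈ K, w i ≤ 2 * ∑ i ∈ K', w i := by
  obtain ⟨K₁, hK₁, hcard₁⟩ := exists_subset_card_eq hn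
  obtain ⟨K₂, hsub, hK₂, hcard₂⟩ := exists_subsuperset_card_eq sdiff_subset
    (by rw [card_sdiff_of_subset hK₁]; omega) hn
  have hsplit : ∑ i ∈ K, w i ≤ ∑ i ∈ K₁, w i + ∑ i ∈ K₂, w i := by
    rw [← sum_sdiff hK₁, add_comm]
    gcongr
  rcases le_total (∑ i ∈ K₁, w i) (∑ i ∈ K₂, w i) with h | h
  · exact ⟨K₂, hK₂, hcard₂, by omega⟩
  · exact ⟨K₁, hK₁, hcard₁, by omega⟩

theorem exists_sum_le_card_mul_sum_fiber [DecidableEq β] {s : Finset α} {t : Finset β}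
    {f : α → β} (w : α → ℕ) (hf : ∀ i ∈ s, f i ∈ t) (ht : t.Nonempty) :
    ∃ y ∈ t, ∑ i ∈ s, w i ≤ #t * ∑ i ∈ s with f i = y, w i := by
  obtain ⟨y, hy, hmax⟩ := exists_max_image t (fun y => ∑ i ∈ s with f i = y, w i) ht
  refine ⟨y, hy, ?_⟩
  rw [← sum_fiberwise_of_maps_to hf, ← smul_eq_mul]
  exact sum_le_card_nsmul _ _ _ hmax

theorem exists_saturated_subset_card_image_eq_pow_two [DecidableEq γ] (g : α → γ) {C : Finset α}
    (hC : C.Nonempty) {M : ℕ} (hM : 1 ≤ M) (hCM : #(C.image g) ≤ 2 ^ M) :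
    ∃ D ⊆ C, ∃ t < M, #(D.image g) = 2 ^ t ∧ #C ≤ 2 * #D ∧ IsSaturated g D C := by
  obtain ⟨t, htM, ht, ht'⟩ :=
    exists_lt_pow_two_le_le_two_mul_pow (card_pos.2 (hC.image g)) hCM hM
  obtain ⟨K, hK, hKcard, hKsum⟩ := exists_subset_card_eq_sum_le_two_mul_sum (C.image g)
    (fun b => #{x ∈ C | g x = b}) ht ht'
  have hDK : {x ∈ C | g x ∈ K}.image g = K := by
    ext b
    simp only [Finset.mem_image, Finset.mem_filter]
    constructor
    · rintro ⟨x, ⟨-, hx⟩, rfl⟩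
      exact hx
    · intro hb
      obtain ⟨x, hx, rfl⟩ := mem_image.1 (hK hb)
      exact ⟨x, ⟨hx, hb⟩, rfl⟩
  refine ⟨{x ∈ C | g x ∈ K}, filter_subset _ _, t, htM, by rw [hDK, hKcard], ?_, ?_⟩
  · rw [card_eq_sum_card_image g C, card_eq_sum_card_image g, hDK]
    refine hKsum.trans_eq (congrArg _ (sum_congr rfl fun b hb => ?_))
    rw [filter_filter]
    congr 1
    exact filter_congr fun x _ => ⟨fun h => ⟨h ▸ hb, h⟩, And.right⟩
  · intro x hx y hy hxy
    simp only [mem_filter] at hx hy ⊢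
    exact ⟨hx, hxy ▸ hy.2⟩

-- `f` and `g` index the cells of a partition and of a refinement of it: the dyadic cubes of two
-- consecutive levels.
theorem exists_uniform_step [DecidableEq α] [DecidableEq β] [DecidableEq γ] [DecidableEq W]
    (f : α → β) (g : α → γ) (hfg : ∀ x y, g x = g y → f x = f y)
    {M : ℕ} (hM : 1 ≤ M) (Φ : β → Finset α → W) (T : Finset W) (hΦ : ∀ j D, Φ j D ∈ T)
    {B : Finset α} (hB : B.Nonempty) (hBM : ∀ j, #({x ∈ B | f x = j}.image g) ≤ 2 ^ M) :
    ∃ B' ⊆ B, ∃ (r : ℕ) (v : W),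
      (∀ j ∈ B'.image f, #({x ∈ B' | f x = j}.image g) = r ∧ Φ j {x ∈ B' | f x = j} = v) ∧
      #B ≤ 2 * M * #T * #B' ∧ IsSaturated g B' B := by
  have hcell : ∀ j ∈ B.image f, ∃ D ⊆ {x ∈ B | f x = j}, ∃ t < M,
      #(D.image g) = 2 ^ t ∧ #{x ∈ B | f x = j} ≤ 2 * #D ∧ IsSaturated g D {x ∈ B | f x = j} := by
    intro j hj
    obtain ⟨x, hx, hxj⟩ := mem_image.1 hj
    exact exists_saturated_subset_card_image_eq_pow_two g ⟨x, mem_filter.2 ⟨hx, hxj⟩⟩ hM (hBM j)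
  choose! D hDsub t htM hDcard hDhalf hDsat using hcell
  set P := B.image f
  set label : β → ℕ × W := fun j => (t j, Φ j (D j))
  have hlabel : ∀ j ∈ P, label j ∈ range M ×ˢ T :=
    fun j hj => mem_product.2 ⟨mem_range.2 (htM j hj), hΦ _ _⟩
  obtain ⟨j₀, hj₀⟩ := hB.image f
  obtain ⟨⟨t₀, v⟩, -, hpig⟩ :=
    exists_sum_le_card_mul_sum_fiber (fun j => #(D j)) hlabel ⟨_, hlabel j₀ hj₀⟩
  set Q := {j ∈ P | label j = (t₀, v)}
  set B' := {x ∈ B | f x ∈ Q ∧ x ∈ D (f x)}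
  have hQP : Q ⊆ P := filter_subset _ _
  have hcellB' : ∀ j ∈ Q, {x ∈ B' | f x = j} = D j := by
    intro j hj
    ext x
    simp only [B', mem_filter]
    constructor
    · rintro ⟨⟨-, -, hx⟩, rfl⟩
      exact hx
    · intro hx
      have hx' := mem_filter.1 (hDsub j (hQP hj) hx)
      exact ⟨⟨hx'.1, hx'.2 ▸ hj, hx'.2 ▸ hx⟩, hx'.2⟩
  have hB'Q : B'.image f ⊆ Q := fun j hj => by
    obtain ⟨x, hx, rfl⟩ := mem_image.1 hj
    exact (mem_filter.1 hx).2.1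
  refine ⟨B', filter_subset _ _, 2 ^ t₀, v, fun j hj => ?_, ?_, ?_⟩
  · have hjQ := (mem_filter.1 (hB'Q hj)).2
    rw [hcellB' j (hB'Q hj)]
    exact ⟨(hDcard j (hQP (hB'Q hj))).trans (congrArg (2 ^ ·.1) hjQ), congrArg Prod.snd hjQ⟩
  · have hB' : #B' = ∑ j ∈ Q, #(D j) := by
      rw [card_eq_sum_card_fiberwise (fun x hx => (mem_filter.1 hx).2.1)]
      exact sum_congr rfl fun j hj => by rw [hcellB' j hj]
    calc #B = ∑ j ∈ P, #{x ∈ B | f x = j} := card_eq_sum_card_image f B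
      _ ≤ ∑ j ∈ P, 2 * #(D j) := sum_le_sum hDhalf
      _ = 2 * ∑ j ∈ P, #(D j) := (mul_sum _ _ _).symm
      _ ≤ 2 * (#(range M ×ˢ T) * #B') := by rw [hB']; gcongr
      _ = 2 * M * #T * #B' := by rw [card_product, card_range]; ring
  · intro x hx y hy hxy
    have hyQ := (mem_filter.1 hy).2
    have hfxy : f x = f y := hfg x y hxy
    have hxD : x ∈ D (f y) := hDsat (f y) (hQP hyQ.1) x (mem_filter.2 ⟨hx, hfxy⟩) y hyQ.2 hxy
    exact mem_filter.2 ⟨hx, hfxy ▸ hyQ.1, hfxy ▸ hxD⟩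


theorem exists_uniform_subset [DecidableEq α] [DecidableEq β] [DecidableEq W] (f : ℕ → α → β)
    (hf : ∀ s x y, f (s + 1) x = f (s + 1) y → f s x = f s y) {M : ℕ} (hM : 1 ≤ M)
    (hfM : ∀ s (B : Finset α) j, #({x ∈ B | f s x = j}.image (f (s + 1))) ≤ 2 ^ M)
    (Φ : ℕ → β → Finset α → W) {S V : ℕ}
    (hΦ : ∀ s < S, ∃ T : Finset W, #T ≤ V ∧ ∀ j D, Φ s j D ∈ T)
    {B : Finset α} (hB : B.Nonempty) :
    ∃ A ⊆ B, ∃ R : ℕ → ℕ,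
      (∀ s < S, ∀ j ∈ A.image (f s), #({x ∈ A | f s x = j}.image (f (s + 1))) = R s) ∧
      (∀ s < S, ∃ v, ∀ j ∈ A.image (f s), Φ s j {x ∈ A | f s x = j} = v) ∧
      #B ≤ (2 * M * V) ^ S * #A ∧ IsSaturated (f S) A B := by
  induction S generalizing B with
  | zero => exact ⟨B, subset_rfl, 0, by simp, by simp, by simp, fun x hx _ _ _ => hx⟩
  | succ S ih =>
    obtain ⟨T, hTV, hΦT⟩ := hΦ S S.lt_succ_self
    obtain ⟨B', hB'B, r, v, hB'cells, hB'card, hB'sat⟩ :=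
      exists_uniform_step (f S) (f (S + 1)) (hf S) hM (Φ S) T hΦT hB (hfM S B)
    have hB' : B'.Nonempty := card_pos.1 (Nat.pos_of_mul_pos_left (hB.card_pos.trans_le hB'card))
    obtain ⟨A, hAB', R, hR, hv, hA, hAsat⟩ := ih (fun s hs => hΦ s (hs.trans S.lt_succ_self)) hB'
    have hcell : ∀ j ∈ A.image (f S), {x ∈ A | f S x = j} = {x ∈ B' | f S x = j} :=
      fun j => hAsat.filter_eq hAB'
    refine ⟨A, hAB'.trans hB'B, Function.update R S r, fun s hs j hj => ?_, fun s hs => ?_, ?_,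
      (hAsat.of_finer (hf S)).trans hB'sat hAB'⟩
    · rcases (Nat.lt_succ_iff_lt_or_eq.1 hs) with hs | rfl
      · rw [Function.update_of_ne hs.ne]
        exact hR s hs j hj
      · rw [Function.update_self, hcell j hj]
        exact (hB'cells j (image_subset_image hAB' hj)).1
    · rcases (Nat.lt_succ_iff_lt_or_eq.1 hs) with hs | rfl
      · exact hv s hs
      · exact ⟨v, fun j hj => hcell j hj ▸ (hB'cells j (image_subset_image hAB' hj)).2⟩
    · calc #B ≤ 2 * M * #T * #B' := hB'card
        _ ≤ 2 * M * V * ((2 * M * V) ^ S * #A) := by gcongr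
        _ = (2 * M * V) ^ (S + 1) * #A := by ring

end Combinatorics

section Geometry

def dyadicIndex (d k : ℕ) (x : EuclideanSpace ℝ (Fin d)) : Fin d → ℤ :=
  fun i => ⌊(2 : ℝ) ^ k * x i⌋

theorem mem_dyadicCube_iff {d k : ℕ} {j : Fin d → ℤ} {x : EuclideanSpace ℝ (Fin d)} :
    x ∈ dyadicCube d k j ↔ dyadicIndex d k x = j := by
  simp only [funext_iff, dyadicIndex, Int.floor_eq_iff]
  rfl

theorem dyadicIndex_eq_ediv (d k L : ℕ) (x : EuclideanSpace ℝ (Fin d)) (i : Fin d) :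
    dyadicIndex d k x i = dyadicIndex d (k + L) x i / 2 ^ L := by
  have h := Int.floor_div_natCast ((2 : ℝ) ^ (k + L) * x i) (2 ^ L)
  push_cast at h
  rw [dyadicIndex, dyadicIndex, ← h, pow_add]
  field_simp

theorem dyadicIndex_eq_of_eq_add {d k L : ℕ} {x y : EuclideanSpace ℝ (Fin d)}
    (h : dyadicIndex d (k + L) x = dyadicIndex d (k + L) y) :
    dyadicIndex d k x = dyadicIndex d k y :=
  funext fun i => by rw [dyadicIndex_eq_ediv d k L x i, dyadicIndex_eq_ediv d k L y i, h]

theorem card_image_dyadicIndex_filter_le (d k L : ℕ) (B : Finset (EuclideanSpace ℝ (Fin d)))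
    (j : Fin d → ℤ) :
    #({x ∈ B | dyadicIndex d k x = j}.image (dyadicIndex d (k + L))) ≤ 2 ^ (L * d) := by
  have hsub : {x ∈ B | dyadicIndex d k x = j}.image (dyadicIndex d (k + L)) ⊆
      Fintype.piFinset fun i => Ico (2 ^ L * j i) (2 ^ L * j i + 2 ^ L) := by
    intro m hm
    obtain ⟨x, hx, rfl⟩ := mem_image.1 hm
    rw [Fintype.mem_piFinset]
    intro i
    have hj : dyadicIndex d (k + L) x i / 2 ^ L = j i := by
      rw [← dyadicIndex_eq_ediv, (mem_filter.1 hx).2]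
    have h₁ := Int.ediv_mul_le (dyadicIndex d (k + L) x i) (b := 2 ^ L) (by positivity)
    have h₂ := Int.lt_ediv_add_one_mul_self (dyadicIndex d (k + L) x i) (b := 2 ^ L) (by positivity)
    rw [hj] at h₁ h₂
    exact mem_Ico.2 ⟨by linarith, by linarith⟩
  refine (Finset.card_le_card hsub).trans_eq ?_
  simp [Fintype.card_piFinset, pow_mul, Int.toNat_pow_of_nonneg]

theorem IsDyadicSet.finite {d m : ℕ} {A : Set (EuclideanSpace ℝ (Fin d))}
    (hA : IsDyadicSet d m A) : A.Finite := by
  refine ((Fintype.piFinset fun _ : Fin d => Ico (0 : ℤ) (2 ^ m)).finite_toSet.image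
    fun n => WithLp.toLp 2 fun i => (n i : ℝ) / 2 ^ m).subset fun x hx => ?_
  choose n hn using hA.2 x hx
  refine ⟨n, Fintype.mem_piFinset.2 fun i => mem_Ico.2 ?_, ?_⟩
  · have h : (0 : ℝ) ≤ n i / 2 ^ m ∧ (n i : ℝ) / 2 ^ m < 1 := hn i ▸ hA.1 hx i
    rw [le_div_iff₀ (by positivity), zero_mul, div_lt_one (by positivity)] at h
    exact ⟨by exact_mod_cast h.1, by exact_mod_cast h.2⟩
  · ext i; simp [hn i]

theorem covIdx_coe (d k : ℕ) (A : Finset (EuclideanSpace ℝ (Fin d))) :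
    covIdx d k A = A.image (dyadicIndex d k) := by
  ext j
  simp [covIdx, Set.Nonempty, mem_dyadicCube_iff]

theorem coe_inter_dyadicCube (d k : ℕ) (A : Finset (EuclideanSpace ℝ (Fin d))) (j : Fin d → ℤ) :
    ↑A ∩ dyadicCube d k j = ({x ∈ A | dyadicIndex d k x = j} : Finset _) := by
  ext x
  simp [mem_dyadicCube_iff]

theorem covNum_coe (d k : ℕ) (A : Finset (EuclideanSpace ℝ (Fin d))) :
    covNum d k A = #(A.image (dyadicIndex d k)) := by
  rw [covNum, covIdx_coe, Set.ncard_coe_finset]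

theorem exists_uniform_finset_subset {d L S V : ℕ} (hLd : 1 ≤ L * d)
    (F : ℕ → Set (EuclideanSpace ℝ (Fin d)) → ℕ)
    (hF : ∀ s < S, ∃ T : Finset ℕ, #T ≤ V ∧ ∀ D, F s D ∈ T)
    {B : Finset (EuclideanSpace ℝ (Fin d))} (hB : B.Nonempty) :
    ∃ A ⊆ B, ∃ R : ℕ → ℕ, IsUniform d L S R A ∧ #B ≤ (2 * (L * d) * V) ^ S * #A ∧
      ∀ s < S, ∃ v : ℕ, ∀ j ∈ covIdx d (s * L) A,
        F s (discretize d L (renorm d (s * L) j '' (A ∩ dyadicCube d (s * L) j))) = v := by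
  obtain ⟨A, hAB, R, hR, hv, hcard, -⟩ := exists_uniform_subset (fun s => dyadicIndex d (s * L))
    (fun s x y h => dyadicIndex_eq_of_eq_add (by rwa [← add_one_mul])) hLd
    (fun s B j => by rw [add_one_mul]; exact card_image_dyadicIndex_filter_le d _ L B j)
    (fun s j D => F s (discretize d L (renorm d (s * L) j '' D)))
    (fun s hs => (hF s hs).imp fun T hT => ⟨hT.1, fun j D => hT.2 _⟩) hB
  refine ⟨A, hAB, R, fun s hs j hj => ?_, hcard, fun s hs => ?_⟩
  · rw [covIdx_coe] at hj
    rw [coe_inter_dyadicCube, covNum_coe]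
    exact hR s hs j hj
  · obtain ⟨v, hv⟩ := hv s hs
    refine ⟨v, fun j hj => ?_⟩
    rw [covIdx_coe] at hj
    rw [coe_inter_dyadicCube]
    exact hv j hj

end Geometry

/-- **Uniformization with prescribed functions**: if `(F_s)_{s<S}` are functions of
`2^{-L}`-sets each taking at most `V` values, then any nonempty `2^{-LS}`-set `A₀` has an
`(L,S)`-uniform subset `A` with `|A| ≥ (2LVd)^{-S}|A₀|` on which, at each level `s`, the
value `F_s(A^I_L)` is the same for all dyadic cubes `I ∈ D_{sL}` meeting `A`. -/
theorem exists_uniform_subset_constant_functions (d L S V : ℕ)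
    (F : ℕ → Set (EuclideanSpace ℝ (Fin d)) → ℕ)
    (hF : ∀ s < S, (Set.range (F s)).Finite ∧ (Set.range (F s)).ncard ≤ V)
    (A₀ : Set (EuclideanSpace ℝ (Fin d))) (hA₀ : IsDyadicSet d (L * S) A₀)
    (hne : A₀.Nonempty) :
    ∃ A ⊆ A₀, ∃ R : ℕ → ℕ, IsUniform d L S R A ∧
      (A.ncard : ℝ) ≥ ((2 * L * V * d : ℝ))⁻¹ ^ S * A₀.ncard ∧
      ∀ s < S, ∃ v : ℕ, ∀ j ∈ covIdx d (s * L) A,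
        F s (discretize d L (renorm d (s * L) j '' (A ∩ dyadicCube d (s * L) j))) = v := by
  classical
  obtain ⟨B, rfl⟩ : ∃ B : Finset (EuclideanSpace ℝ (Fin d)), ↑B = A₀ :=
    ⟨_, hA₀.finite.coe_toFinset⟩
  rcases Nat.eq_zero_or_pos S with rfl | hS
  · exact ⟨B, subset_rfl, 0, fun s hs => absurd hs s.not_lt_zero, by simp,
      fun s hs => absurd hs s.not_lt_zero⟩
  rcases eq_or_ne (2 * L * V * d : ℝ) 0 with h0 | h0
  · refine ⟨∅, Set.empty_subset _, 0, fun s _ j hj => ?_, ?_, fun s _ => ⟨0, fun j hj => ?_⟩⟩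
    · simp [covIdx] at hj
    · simp [h0, zero_pow hS.ne']
    · simp [covIdx] at hj
  have hLd : 1 ≤ L * d := by
    simp only [ne_eq, mul_eq_zero, Nat.cast_eq_zero, not_or] at h0
    exact Nat.one_le_iff_ne_zero.2 (mul_ne_zero h0.1.1.2 h0.2)
  obtain ⟨A, hAB, R, hR, hcard, hv⟩ := exists_uniform_finset_subset hLd F
    (fun s hs => ⟨(hF s hs).1.toFinset, Set.ncard_eq_toFinset_card _ (hF s hs).1 ▸ (hF s hs).2,
      fun D => by simp⟩) (by simpa using hne)
  refine ⟨A, by exact_mod_cast hAB, R, hR, ?_, hv⟩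
  rw [Set.ncard_coe_finset, Set.ncard_coe_finset, ge_iff_le, inv_pow,
    inv_mul_le_iff₀ (pow_pos (lt_of_le_of_ne (by positivity) h0.symm) S)]
  calc (#B : ℝ) ≤ ((2 * (L * d) * V) ^ S * #A : ℕ) := by exact_mod_cast hcard
    _ = _ := by push_cast; ring
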